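/- For every n ≥ 1, a permutation π of {1,…,n} satisfies T^2(π) = id if and only if π avoids both the pattern 2431 and the barred pattern 241-5̄-3. That is, the set of 2-revstack sortable permutations of length n equals the set of permutations of length n containing neither an occurrence of 2431 nor an occurrence of 2413 (as values b,d,a,c with a<b<c<d in this order) having no value e > d between a and c. -/

import Mathlib

private theorem length_takeWhile_ne_lt {w : List ℕ} {m : ℕ} (hm : m ∈ w) :
    (w.takeWhile (· ≠ m)).length < w.length := by
  induction w with
  | nil => cases hm
  | cons a as ih =>
    by_cases ha : a = m
    · subst ha
      simp [List.takeWhile_cons]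
    · rw [List.takeWhile_cons_of_pos (by simpa using ha)]
      have hm' : m ∈ as := by
        rcases List.mem_cons.mp hm with h | h
        · exact absurd h.symm ha
        · exact h
      simpa using Nat.succ_lt_succ (ih hm')

private theorem length_tail_dropWhile_lt {w : List ℕ} (hw : w ≠ []) (p : ℕ → Bool) :
    ((w.dropWhile p).tail).length < w.length := by
  cases hd : w.dropWhile p with
  | nil => simpa using List.length_pos_iff.mpr hw
  | cons x xs =>
    have h1 : (x :: xs).length ≤ w.length := by
      rw [← hd]; exact (List.dropWhile_sublist p).length_le
    simp only [List.tail_cons]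
    exact lt_of_lt_of_le (by simp) h1

/-- The classical stack sort operator on words: `S(ε) = ε` and `S(L m R) = S(L) S(R) m`,
where `m` is the largest entry of the word `L m R`. -/
def stackSort : List ℕ → List ℕ
  | [] => []
  | a :: as =>
    let m := ((a :: as).max?).getD 0
    stackSort ((a :: as).takeWhile (· ≠ m)) ++
      stackSort (((a :: as).dropWhile (· ≠ m)).tail) ++ [m]
termination_by w => w.length
decreasing_by
  · refine length_takeWhile_ne_lt ?_
    have : (a :: as).max? = some (((a :: as).max?).getD 0) := by
      cases h : (a :: as).max? with
      | none => simp [List.max?_eq_none_iff] at h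
      | some b => simp
    exact List.max?_mem this
  · exact length_tail_dropWhile_lt (by simp) _

/-- The revstack sort operator `T = S ∘ rev`. -/
def revstackSort (w : List ℕ) : List ℕ := stackSort w.reverse

/-- The word of the identity permutation of `{1,…,n}`, namely `1 2 ⋯ n`. -/
def idPerm (n : ℕ) : List ℕ := List.range' 1 n

/-- `w` is (the word of) a permutation of `{1,…,n}`. -/
def IsPermWord (n : ℕ) (w : List ℕ) : Prop := w.Perm (idPerm n)

/-- `x` precedes `y` in the word `w`, i.e. the position of `x` is smaller than that of `y`. -/
def Precedes (w : List ℕ) (x y : ℕ) : Prop := w.idxOf x < w.idxOf y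

/-- `w` contains an occurrence of the pattern `132`: values `a < b < c` occurring in
the order `a, c, b`. -/
def Contains132 (w : List ℕ) : Prop :=
  ∃ a b c, a ∈ w ∧ b ∈ w ∧ c ∈ w ∧ a < b ∧ b < c ∧ Precedes w a c ∧ Precedes w c b

/-- `w` contains an occurrence of the pattern `2431`: values `a < b < c < d` occurring in
the order `b, d, c, a`. -/
def Contains2431 (w : List ℕ) : Prop :=
  ∃ a b c d, a ∈ w ∧ b ∈ w ∧ c ∈ w ∧ d ∈ w ∧ a < b ∧ b < c ∧ c < d ∧
    Precedes w b d ∧ Precedes w d c ∧ Precedes w c a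

/-- `w` contains an occurrence of the barred pattern `241 5̄ 3`: values `a < b < c < d`
occurring in the order `b, d, a, c` with no value `e > d` lying between `a` and `c` in `w`. -/
def ContainsBarred24153 (w : List ℕ) : Prop :=
  ∃ a b c d, a ∈ w ∧ b ∈ w ∧ c ∈ w ∧ d ∈ w ∧ a < b ∧ b < c ∧ c < d ∧
    Precedes w b d ∧ Precedes w d a ∧ Precedes w a c ∧
    ¬ ∃ e, e ∈ w ∧ d < e ∧ Precedes w a e ∧ Precedes w e c

/-- The number of descents of a word. -/
def des (w : List ℕ) : ℕ := ((w.zip w.tail).filter (fun p => p.2 < p.1)).length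

/-- The finset of all words of permutations of `{1,…,n}`. -/
def permsOf (n : ℕ) : Finset (List ℕ) := (idPerm n).permutations.toFinset

/-- The finset of `t`-revstack sortable permutations of `{1,…,n}`. -/
def revstackSortable (n t : ℕ) : Finset (List ℕ) :=
  (permsOf n).filter (fun w => revstackSort^[t] w = idPerm n)

/-- The finset of `t`-stack sortable permutations of `{1,…,n}`. -/
def stackSortable (n t : ℕ) : Finset (List ℕ) :=
  (permsOf n).filter (fun w => stackSort^[t] w = idPerm n)

/-- The descent polynomial `W(A;x) = ∑_{π ∈ A} x^{1+des(π)}` of a set of permutations. -/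
noncomputable def descPoly (A : Finset (List ℕ)) : Polynomial ℚ :=
  ∑ w ∈ A, Polynomial.X ^ (1 + des w)

/-- The `m`-th Eulerian polynomial `A_m(x) = ∑_{π ∈ S_m} x^{1+des(π)}`, with `A_0(x) = 1`. -/
noncomputable def eulerianPoly (m : ℕ) : Polynomial ℚ :=
  if m = 0 then 1 else descPoly (permsOf m)

/-- `v_t(n,i)`: the number of `t`-revstack sortable permutations of `{1,…,n}`
with exactly `i` descents. -/
def vNum (t n i : ℕ) : ℕ := ((revstackSortable n t).filter (fun w => des w = i)).card

/-- `w_t(n,i)`: the number of `t`-stack sortable permutations of `{1,…,n}`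
with exactly `i` descents. -/
def wNum (t n i : ℕ) : ℕ := ((stackSortable n t).filter (fun w => des w = i)).card

/-!
Splitting `w = L m R` at its maximum `m` gives `T(w) = T(R) T(L) m`, and induction on this split
shows that for `x < y` the entry `y` precedes `x` in `T(w)` exactly when `x` precedes `y` in `w`
with some entry larger than `y` between them. Hence `T(w)` is sorted iff `w` avoids `132`, and an
occurrence `a c b` of `132` in `T(π)` pulls back to an occurrence of `2431` or of `241-5̄-3` in `π`.
Conversely, an occurrence `b d a c` of `241-5̄-3` gives one of `132` in `T(π)` once `c` is replaced
by the largest entry between `a` and `c`, which is still smaller than `d`.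
-/
theorem induction_on_max_split {P : List ℕ → Prop} (nil : P [])
    (append_cons : ∀ L m R, m ∉ L → (∀ z ∈ L ++ m :: R, z ≤ m) → P L → P R → P (L ++ m :: R))
    (w : List ℕ) : P w := by
  induction h : w.length using Nat.strong_induction_on generalizing w with
  | _ k ih =>
    by_cases hw : w = []
    · exact hw ▸ nil
    obtain ⟨m, hm⟩ := Option.ne_none_iff_exists'.mp (mt List.max?_eq_none_iff.mp hw)
    obtain ⟨hmw, hmax⟩ := List.max?_eq_some_iff.mp hm
    obtain ⟨L, R, rfl, hmL⟩ := List.eq_append_cons_of_mem hmw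
    simp only [List.length_append, List.length_cons] at h
    exact append_cons L m R hmL hmax (ih _ (by omega) L rfl) (ih _ (by omega) R rfl)

theorem stackSort_append_cons {L R : List ℕ} {m : ℕ} (hmL : m ∉ L)
    (hmax : ∀ z ∈ L ++ m :: R, z ≤ m) :
    stackSort (L ++ m :: R) = stackSort L ++ stackSort R ++ [m] := by
  obtain ⟨a, as, h⟩ := List.exists_cons_of_ne_nil (List.append_ne_nil_of_right_ne_nil L
    (List.cons_ne_nil m R))
  have hM : (L ++ m :: R).max? = some m := List.max?_eq_some_iff.mpr ⟨by simp, hmax⟩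
  have hL : ∀ a ∈ L, (!decide (a = m)) = true := fun a ha => by
    simpa using fun h : a = m => hmL (h ▸ ha)
  rw [h, stackSort, ← h, hM]
  simp [List.takeWhile_append_of_pos hL, List.dropWhile_append_of_pos hL]

theorem stackSort_perm (w : List ℕ) : (stackSort w).Perm w := by
  induction w using induction_on_max_split with
  | nil => simp [stackSort]
  | append_cons L m R hmL hmax hL hR =>
    rw [stackSort_append_cons hmL hmax, List.append_assoc]
    exact hL.append (hR.append_right [m] |>.trans List.perm_append_comm)

theorem revstackSort_perm (w : List ℕ) : (revstackSort w).Perm w :=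
  (stackSort_perm w.reverse).trans w.reverse_perm

@[simp]
theorem mem_revstackSort {w : List ℕ} {x : ℕ} : x ∈ revstackSort w ↔ x ∈ w :=
  (revstackSort_perm w).mem_iff

theorem revstackSort_append_cons {L R : List ℕ} {m : ℕ} (hmR : m ∉ R)
    (hmax : ∀ z ∈ L ++ m :: R, z ≤ m) :
    revstackSort (L ++ m :: R) = revstackSort R ++ revstackSort L ++ [m] := by
  have hrev : (L ++ m :: R).reverse = R.reverse ++ m :: L.reverse := by simp
  rw [revstackSort, hrev, stackSort_append_cons (by simpa using hmR)]
  · rfl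
  · intro z hz
    exact hmax z (by simp at hz ⊢; tauto)

theorem Precedes.trans {w : List ℕ} {x y z : ℕ} (hxy : Precedes w x y) (hyz : Precedes w y z) :
    Precedes w x z :=
  Nat.lt_trans hxy hyz

theorem Precedes.asymm {w : List ℕ} {x y : ℕ} (h : Precedes w x y) : ¬ Precedes w y x :=
  Nat.lt_asymm h

theorem Precedes.mem_left {w : List ℕ} {x y : ℕ} (h : Precedes w x y) : x ∈ w :=
  List.idxOf_lt_length_iff.mp (h.trans_le List.idxOf_le_length)

theorem precedes_or_precedes {w : List ℕ} {x y : ℕ} (hx : x ∈ w) (hxy : x ≠ y) :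
    Precedes w x y ∨ Precedes w y x :=
  Nat.lt_or_gt_of_ne (mt (List.idxOf_inj hx).mp hxy)

theorem precedes_append_left {l₁ l₂ : List ℕ} {x y : ℕ} (hx : x ∈ l₁) (hy : y ∈ l₁) :
    Precedes (l₁ ++ l₂) x y ↔ Precedes l₁ x y := by
  simp only [Precedes, List.idxOf_append_of_mem hx, List.idxOf_append_of_mem hy]

theorem precedes_append_right {l₁ l₂ : List ℕ} {x y : ℕ} (hx : x ∉ l₁) (hy : y ∉ l₁) :
    Precedes (l₁ ++ l₂) x y ↔ Precedes l₂ x y := by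
  simp only [Precedes, List.idxOf_append_of_notMem hx, List.idxOf_append_of_notMem hy,
    Nat.add_lt_add_iff_left]

theorem precedes_append_of_mem_of_notMem {l₁ l₂ : List ℕ} {x y : ℕ} (hx : x ∈ l₁)
    (hy : y ∉ l₁) : Precedes (l₁ ++ l₂) x y := by
  have := List.idxOf_lt_length_iff.mpr hx
  simp only [Precedes, List.idxOf_append_of_mem hx, List.idxOf_append_of_notMem hy]
  omega

theorem mem_of_precedes_append {l₁ l₂ : List ℕ} {x y : ℕ} (hy : y ∈ l₁)
    (h : Precedes (l₁ ++ l₂) x y) : x ∈ l₁ :=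
  of_not_not fun hx => h.asymm (precedes_append_of_mem_of_notMem hy hx)

def HasLargerBetween (w : List ℕ) (x y : ℕ) : Prop :=
  ∃ z, y < z ∧ Precedes w x z ∧ Precedes w z y

theorem HasLargerBetween.precedes {w : List ℕ} {x y : ℕ} (h : HasLargerBetween w x y) :
    Precedes w x y :=
  let ⟨_, _, hxz, hzy⟩ := h
  hxz.trans hzy

theorem hasLargerBetween_append_left {l₁ l₂ : List ℕ} {x y : ℕ} (hx : x ∈ l₁) (hy : y ∈ l₁) :
    HasLargerBetween (l₁ ++ l₂) x y ↔ HasLargerBetween l₁ x y := by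
  constructor
  · rintro ⟨z, hyz, hxz, hzy⟩
    have hz := mem_of_precedes_append hy hzy
    exact ⟨z, hyz, (precedes_append_left hx hz).mp hxz, (precedes_append_left hz hy).mp hzy⟩
  · rintro ⟨z, hyz, hxz, hzy⟩
    have hz := hzy.mem_left
    exact ⟨z, hyz, (precedes_append_left hx hz).mpr hxz, (precedes_append_left hz hy).mpr hzy⟩

theorem hasLargerBetween_append_right {l₁ l₂ : List ℕ} {x y : ℕ} (hd : l₁.Disjoint l₂)
    (hx : x ∈ l₂) (hy : y ∈ l₂) :
    HasLargerBetween (l₁ ++ l₂) x y ↔ HasLargerBetween l₂ x y := by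
  have hx' : x ∉ l₁ := fun h => hd h hx
  have hy' : y ∉ l₁ := fun h => hd h hy
  constructor
  · rintro ⟨z, hyz, hxz, hzy⟩
    have hz : z ∉ l₁ := fun hz => hx' (mem_of_precedes_append hz hxz)
    exact ⟨z, hyz, (precedes_append_right hx' hz).mp hxz, (precedes_append_right hz hy').mp hzy⟩
  · rintro ⟨z, hyz, hxz, hzy⟩
    have hz : z ∉ l₁ := fun h => hd h hzy.mem_left
    exact ⟨z, hyz, (precedes_append_right hx' hz).mpr hxz,
      (precedes_append_right hz hy').mpr hzy⟩

theorem precedes_revstackSort_iff {w : List ℕ} (hw : w.Nodup) {x y : ℕ} (hx : x ∈ w)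
    (hy : y ∈ w) (hxy : x < y) :
    Precedes (revstackSort w) y x ↔ HasLargerBetween w x y := by
  induction w using induction_on_max_split generalizing x y with
  | nil => simp at hx
  | append_cons L m R hmL hmax ihL ihR =>
    have hsplit : L ++ m :: R = L ++ [m] ++ R := List.append_cons ..
    rw [hsplit] at hw
    have hLmR : (L ++ [m]).Disjoint R := List.disjoint_of_nodup_append hw
    have hLR : L.Disjoint R := fun a ha => hLmR (by simp [ha])
    have hmR : m ∉ R := hLmR (by simp)
    obtain ⟨⟨hndL, -⟩, hndR, -⟩ := List.nodup_append.mp hw |>.imp_left List.nodup_append.mp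
    have hTL : ∀ {a}, a ∈ L → a ∈ revstackSort R ++ revstackSort L ∧ a ∉ revstackSort R :=
      fun ha => ⟨by simp [ha], fun h => hLR ha (mem_revstackSort.mp h)⟩
    have hTR : ∀ {a}, a ∈ R → a ∈ revstackSort R ++ revstackSort L ∧ a ∈ revstackSort R :=
      fun ha => ⟨by simp [ha], mem_revstackSort.mpr ha⟩
    rw [revstackSort_append_cons hmR hmax]
    by_cases hym : y = m
    · subst hym
      have hxT : x ∈ revstackSort R ++ revstackSort L := by simp at hx ⊢; grind
      have hyT : y ∉ revstackSort R ++ revstackSort L := by simp [hmL, hmR]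
      exact iff_of_false (fun h => h.asymm (precedes_append_of_mem_of_notMem hxT hyT))
        fun ⟨z, hyz, _, hzy⟩ => (hmax z hzy.mem_left).not_gt hyz
    simp only [List.mem_append, List.mem_cons] at hx hy
    rcases hx with hxL | rfl | hxR
    · rcases hy with hyL | hyM | hyR
      · rw [precedes_append_left (hTL hyL).1 (hTL hxL).1,
          precedes_append_right (hTL hyL).2 (hTL hxL).2, ihL hndL hxL hyL hxy,
          hasLargerBetween_append_left hxL hyL]
      · exact absurd hyM hym
      · have hym' : y < m := (hmax y (by simp [hyR])).lt_of_ne hym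
        refine iff_of_true ?_ ⟨m, hym', precedes_append_of_mem_of_notMem hxL hmL, ?_⟩
        · rw [precedes_append_left (hTR hyR).1 (hTL hxL).1]
          exact precedes_append_of_mem_of_notMem (hTR hyR).2 (hTL hxL).2
        · rw [hsplit]
          exact precedes_append_of_mem_of_notMem (by simp) (hLmR · hyR)
    · exact absurd (hmax y (by grind)) (by omega)
    · rcases hy with hyL | hyM | hyR
      · refine iff_of_false (fun h => ?_) (fun h => ?_)
        · rw [precedes_append_left (hTL hyL).1 (hTR hxR).1] at h
          exact h.asymm (precedes_append_of_mem_of_notMem (hTR hxR).2 (hTL hyL).2)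
        · exact h.precedes.asymm (precedes_append_of_mem_of_notMem hyL (hLR · hxR))
      · exact absurd hyM hym
      · rw [precedes_append_left (hTR hyR).1 (hTR hxR).1,
          precedes_append_left (hTR hyR).2 (hTR hxR).2, ihR hndR hxR hyR hxy, hsplit,
          hasLargerBetween_append_right hLmR hxR hyR]

theorem pairwise_lt_iff_forall_not_precedes {l : List ℕ} (hl : l.Nodup) :
    l.Pairwise (· < ·) ↔ ∀ x ∈ l, ∀ y ∈ l, x < y → ¬ Precedes l y x := by
  rw [List.pairwise_iff_getElem]
  constructor
  · intro h x hx y hy hxy hyx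
    have hix := List.idxOf_lt_length_iff.mpr hx
    have := h _ _ (Nat.lt_trans hyx hix) hix hyx
    rw [List.getElem_idxOf, List.getElem_idxOf] at this
    omega
  · intro h i j hi hj hij
    refine (lt_or_gt_of_ne fun he => ?_).resolve_right fun hji => ?_
    · exact hij.ne ((hl.getElem_inj_iff).mp he)
    · exact h _ (List.getElem_mem hj) _ (List.getElem_mem hi) hji (by simpa [Precedes, hl])

theorem contains132_iff_exists_hasLargerBetween {w : List ℕ} :
    Contains132 w ↔ ∃ a ∈ w, ∃ b ∈ w, a < b ∧ HasLargerBetween w a b := by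
  constructor
  · rintro ⟨a, b, c, ha, hb, -, hab, hbc, hac, hcb⟩
    exact ⟨a, ha, b, hb, hab, c, hbc, hac, hcb⟩
  · rintro ⟨a, ha, b, hb, hab, c, hbc, hac, hcb⟩
    exact ⟨a, b, c, ha, hb, hcb.mem_left, hab, hbc, hac, hcb⟩

theorem revstackSort_pairwise_lt_iff {w : List ℕ} (hw : w.Nodup) :
    (revstackSort w).Pairwise (· < ·) ↔ ¬ Contains132 w := by
  rw [pairwise_lt_iff_forall_not_precedes ((revstackSort_perm w).nodup_iff.mpr hw),
    contains132_iff_exists_hasLargerBetween]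
  simp only [mem_revstackSort, not_exists, not_and]
  exact forall₂_congr fun x hx => forall₂_congr fun y hy =>
    imp_congr_right fun hxy => not_congr (precedes_revstackSort_iff hw hx hy hxy)

theorem revstackSort_eq_idPerm_iff {n : ℕ} {w : List ℕ} (hw : IsPermWord n w) :
    revstackSort w = idPerm n ↔ ¬ Contains132 w := by
  have hsorted : (idPerm n).Pairwise (· < ·) := List.pairwise_lt_range'
  rw [← revstackSort_pairwise_lt_iff (hw.nodup_iff.mpr List.nodup_range')]
  refine ⟨fun h => h ▸ hsorted, fun h => ?_⟩
  exact ((revstackSort_perm w).trans hw).eq_of_pairwise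
    (fun _ _ _ _ hab hba => absurd hab hba.asymm) h hsorted

theorem precedes_revstackSort_iff_not_hasLargerBetween {w : List ℕ} (hw : w.Nodup) {x y : ℕ}
    (hx : x ∈ w) (hy : y ∈ w) (hxy : x < y) :
    Precedes (revstackSort w) x y ↔ ¬ HasLargerBetween w x y := by
  rw [← precedes_revstackSort_iff hw hx hy hxy]
  exact ⟨Precedes.asymm,
    (precedes_or_precedes (mem_revstackSort.mpr hx) hxy.ne).resolve_right⟩

theorem exists_le_not_hasLargerBetween {w : List ℕ} {a c : ℕ} (hac : Precedes w a c) :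
    ∃ c', c ≤ c' ∧ Precedes w a c' ∧ (c' = c ∨ Precedes w c' c) ∧
      ¬ HasLargerBetween w a c' := by
  induction h : w.idxOf c using Nat.strong_induction_on generalizing c with
  | _ k ih =>
    by_cases hc : HasLargerBetween w a c
    · obtain ⟨e, hce, hae, hec⟩ := hc
      obtain ⟨c', hec', hac', hc'e, hmax⟩ := ih _ (h ▸ hec) hae rfl
      exact ⟨c', hce.le.trans hec', hac', Or.inr (hc'e.elim (· ▸ hec) (·.trans hec)), hmax⟩
    · exact ⟨c, le_rfl, hac, Or.inl rfl, hc⟩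

theorem contains132_revstackSort_iff {w : List ℕ} (hw : w.Nodup) :
    Contains132 (revstackSort w) ↔ Contains2431 w ∨ ContainsBarred24153 w := by
  constructor
  · rintro ⟨a, b, c, ha, hb, hc, hab, hbc, hac, hcb⟩
    rw [mem_revstackSort] at ha hb hc
    rw [precedes_revstackSort_iff_not_hasLargerBetween hw ha hc (hab.trans hbc)] at hac
    obtain ⟨d, hcd, hbd, hdc⟩ := (precedes_revstackSort_iff hw hb hc hbc).mp hcb
    have hd := hdc.mem_left
    rcases precedes_or_precedes hc (hab.trans hbc).ne' with hca | hac'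
    · exact Or.inl ⟨a, b, c, d, ha, hb, hc, hd, hab, hbc, hcd, hbd, hdc, hca⟩
    · have hda : Precedes w d a :=
        (precedes_or_precedes hd (by omega)).resolve_right fun had => hac ⟨d, hcd, had, hdc⟩
      exact Or.inr ⟨a, b, c, d, ha, hb, hc, hd, hab, hbc, hcd, hbd, hda, hac',
        fun ⟨e, _, hde, hae, hec⟩ => hac ⟨e, hcd.trans hde, hae, hec⟩⟩
  · rintro (⟨a, b, c, d, ha, hb, hc, hd, hab, hbc, hcd, hbd, hdc, hca⟩ |
      ⟨a, b, c, d, ha, hb, hc, hd, hab, hbc, hcd, hbd, hda, hac, hbar⟩)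
    · refine ⟨a, b, c, mem_revstackSort.mpr ha, mem_revstackSort.mpr hb,
        mem_revstackSort.mpr hc, hab, hbc, ?_, ?_⟩
      · rw [precedes_revstackSort_iff_not_hasLargerBetween hw ha hc (hab.trans hbc)]
        exact fun h => h.precedes.asymm hca
      · exact (precedes_revstackSort_iff hw hb hc hbc).mpr ⟨d, hcd, hbd, hdc⟩
    · obtain ⟨c', hcc', hac', hc'c, hmax⟩ := exists_le_not_hasLargerBetween hac
      have hc' : c' ∈ w := hc'c.elim (· ▸ hc) Precedes.mem_left
      have hc'd : c' < d := by
        refine lt_of_le_of_ne (not_lt.mp fun hdc' => ?_) fun he => (he ▸ hda).asymm hac'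
        exact hc'c.elim (fun he => by omega) fun hc'c => hbar ⟨c', hc', hdc', hac', hc'c⟩
      refine ⟨a, b, c', mem_revstackSort.mpr ha, mem_revstackSort.mpr hb,
        mem_revstackSort.mpr hc', hab, hbc.trans_le hcc', ?_, ?_⟩
      · rw [precedes_revstackSort_iff_not_hasLargerBetween hw ha hc' (by omega)]
        exact hmax
      · exact (precedes_revstackSort_iff hw hb hc' (by omega)).mpr
          ⟨d, hc'd, hbd, hda.trans hac'⟩

theorem two_revstack_sortable_iff_general
    (n : ℕ) (π : List ℕ) (hπ : IsPermWord n π) :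
    revstackSort^[2] π = idPerm n ↔ ¬ Contains2431 π ∧ ¬ ContainsBarred24153 π := by
  have hnd : π.Nodup := hπ.nodup_iff.mpr List.nodup_range'
  rw [Function.iterate_succ_apply, Function.iterate_one,
    revstackSort_eq_idPerm_iff ((revstackSort_perm π).trans hπ), contains132_revstackSort_iff hnd,
    not_or]

theorem two_revstack_sortable_iff
    (n : ℕ) (hn : 1 ≤ n) (π : List ℕ) (hπ : IsPermWord n π) :
    revstackSort^[2] π = idPerm n ↔ ¬ Contains2431 π ∧ ¬ ContainsBarred24153 π :=
  two_revstack_sortable_iff_general n π hπ
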